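/- For fixed μ > 0 and λ ∈ (0, μ), the equation s·log(μ/(μ−λ)) = sup_{0≤r<t} {(t−r)(λ²/2 − μλ) + Λ_{s,t−r}(λ)} ∨ sup_{0≤u<s} {t(λ²/2 − μλ) + u·log(μ/(μ−λ)) + Λ_{s−u,t}(λ)} holds for all s, t > 0, where Λ_{s,t}(λ) := min_{z>0}{t(λ²/2 + zλ) + s·log((z+λ)/z)} for s,t > 0 extended by Λ_{s,0}(λ) = 0 and Λ_{0,t}(λ) = λ²t/2. -/

import Mathlib

/-!
Evaluating the objective of `Lam s τ` at `z = μ - λ` bounds every candidate in both suprema by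
`s log (μ / (μ - λ))`. This choice of `z` is optimal exactly when `s = τ μ (μ - λ)` (the critical
point of `z ↦ τ λ z + s log ((z + λ) / z)`), and one can always choose `r` or `u` so that the
remaining pair `(s, t - r)` or `(s - u, t)` has this ratio, which makes the bound attained.
-/

/-- The point-to-point Lyapunov exponent `Λ_{s,t}(λ)` of Brownian directed percolation,
as the variational (minimal) value, extended by `Λ_{0,t}(λ) = λ²t/2` and `Λ_{s,0}(λ) = 0`. -/
noncomputable def Lam (s t lam : ℝ) : ℝ :=
  if s = 0 then lam ^ 2 * t / 2
  else if t = 0 then 0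
  else sInf {y : ℝ | ∃ z > 0, y = t * (lam ^ 2 / 2 + z * lam) + s * Real.log ((z + lam) / z)}

open Real

noncomputable def lamCost (s t lam z : ℝ) : ℝ :=
  t * (lam ^ 2 / 2 + z * lam) + s * log ((z + lam) / z)

lemma Lam_eq_sInf_image {s t : ℝ} (lam : ℝ) (hs : s ≠ 0) (ht : t ≠ 0) :
    Lam s t lam = sInf (lamCost s t lam '' Set.Ioi 0) := by
  simp only [Lam, hs, ht, if_false]
  congr 1
  ext y
  simp only [Set.mem_ofPred_eq, Set.mem_image, Set.mem_Ioi, lamCost]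
  exact exists_congr fun _ => and_congr_right fun _ => eq_comm

lemma lamCost_bddBelow {s t lam : ℝ} (hs : 0 ≤ s) (ht : 0 ≤ t) (hlam : 0 < lam) :
    BddBelow (lamCost s t lam '' Set.Ioi 0) := by
  refine ⟨t * (lam ^ 2 / 2), ?_⟩
  rintro _ ⟨z, hz, rfl⟩
  have hlog : 0 ≤ log ((z + lam) / z) :=
    log_nonneg <| (one_le_div₀ hz).mpr (by linarith)
  have : 0 ≤ t * (z * lam) := mul_nonneg ht (mul_pos hz hlam).le
  unfold lamCost
  nlinarith [mul_nonneg hs hlog]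

lemma Lam_le_lamCost {s t lam z : ℝ} (hs : 0 < s) (ht : 0 < t) (hlam : 0 < lam) (hz : 0 < z) :
    Lam s t lam ≤ lamCost s t lam z := by
  rw [Lam_eq_sInf_image lam hs.ne' ht.ne']
  exact csInf_le (lamCost_bddBelow hs.le ht.le hlam) ⟨z, hz, rfl⟩

/-- By `log x ≤ x - 1` at `x = (a + λ) z / (a (z + λ))`. -/
lemma lamCost_le_of_critical {t a lam z : ℝ} (ht : 0 ≤ t) (hlam : 0 < lam) (ha : 0 < a)
    (hz : 0 < z) :
    lamCost (t * (a * (a + lam))) t lam a ≤ lamCost (t * (a * (a + lam))) t lam z := by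
  have hal : 0 < a + lam := by linarith
  have hzl : 0 < z + lam := by linarith
  set x := (a + lam) * z / (a * (z + lam)) with hx
  have hlog_diff : log ((a + lam) / a) - log ((z + lam) / z) = log x := by
    rw [hx, log_div (x := (a + lam) * z) (by positivity) (by positivity), log_div hal.ne' ha.ne',
      log_div hzl.ne' hz.ne', log_mul hal.ne' hz.ne', log_mul ha.ne' hzl.ne']
    ring
  have hx_sub_one : a * (a + lam) * (x - 1) = lam * (z - a) * (a + lam) / (z + lam) := by
    rw [hx]; field_simp; ring
  have hratio : lam * (z - a) * (a + lam) / (z + lam) ≤ lam * (z - a) := by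
    rw [div_le_iff₀ hzl]
    nlinarith [mul_nonneg hlam.le (sq_nonneg (z - a))]
  have hkey : a * (a + lam) * log x ≤ lam * (z - a) := by
    have := log_le_sub_one_of_pos (show 0 < x by positivity)
    nlinarith [mul_pos ha hal]
  have := mul_le_mul_of_nonneg_left hkey ht
  rw [← hlog_diff] at this
  unfold lamCost
  nlinarith [this]

lemma Lam_eq_lamCost_of_critical {t a lam : ℝ} (ht : 0 < t) (hlam : 0 < lam) (ha : 0 < a) :
    Lam (t * (a * (a + lam))) t lam = lamCost (t * (a * (a + lam))) t lam a := by
  have hs : 0 < t * (a * (a + lam)) := by positivity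
  rw [Lam_eq_sInf_image lam hs.ne' ht.ne']
  refine IsLeast.csInf_eq ⟨⟨a, ha, rfl⟩, ?_⟩
  rintro _ ⟨z, hz, rfl⟩
  exact lamCost_le_of_critical ht.le hlam ha hz

section Burke

variable {μ lam : ℝ}

lemma lamCost_sub_self (s t : ℝ) :
    lamCost s t lam (μ - lam) = s * log (μ / (μ - lam)) - t * (lam ^ 2 / 2 - μ * lam) := by
  rw [lamCost, sub_add_cancel]
  ring

lemma add_Lam_le {s t : ℝ} (hs : 0 < s) (ht : 0 < t) (hlam : 0 < lam) (hlt : lam < μ) :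
    t * (lam ^ 2 / 2 - μ * lam) + Lam s t lam ≤ s * log (μ / (μ - lam)) := by
  have := Lam_le_lamCost hs ht hlam (sub_pos.mpr hlt)
  rw [lamCost_sub_self s t] at this
  linarith

lemma add_Lam_of_critical {t : ℝ} (ht : 0 < t) (hlam : 0 < lam) (hlt : lam < μ) :
    t * (lam ^ 2 / 2 - μ * lam) + Lam (t * (μ * (μ - lam))) t lam =
      t * (μ * (μ - lam)) * log (μ / (μ - lam)) := by
  have h := Lam_eq_lamCost_of_critical ht hlam (sub_pos.mpr hlt)
  rw [sub_add_cancel, mul_comm (μ - lam) μ, lamCost_sub_self] at h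
  linarith

end Burke

theorem burke_variational_identity_general (μ lam : ℝ) (hlam : 0 < lam)
    (hlt : lam < μ) :
    ∀ s t : ℝ, 0 < s → 0 < t →
      s * Real.log (μ / (μ - lam)) =
        max
          (sSup {y : ℝ | ∃ r ∈ Set.Ico (0:ℝ) t,
            y = (t - r) * (lam ^ 2 / 2 - μ * lam) + Lam s (t - r) lam})
          (sSup {y : ℝ | ∃ u ∈ Set.Ico (0:ℝ) s,
            y = t * (lam ^ 2 / 2 - μ * lam) + u * Real.log (μ / (μ - lam)) +
              Lam (s - u) t lam}) := by
  intro s t hs ht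
  set L := log (μ / (μ - lam))
  set c := μ * (μ - lam)
  have hc : 0 < c := mul_pos (by linarith) (sub_pos.mpr hlt)
  set S₁ := {y : ℝ | ∃ r ∈ Set.Ico (0:ℝ) t,
    y = (t - r) * (lam ^ 2 / 2 - μ * lam) + Lam s (t - r) lam}
  set S₂ := {y : ℝ | ∃ u ∈ Set.Ico (0:ℝ) s,
    y = t * (lam ^ 2 / 2 - μ * lam) + u * L + Lam (s - u) t lam}
  have ub₁ : ∀ y ∈ S₁, y ≤ s * L := by
    rintro _ ⟨r, ⟨-, hrt⟩, rfl⟩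
    exact add_Lam_le hs (sub_pos.mpr hrt) hlam hlt
  have ub₂ : ∀ y ∈ S₂, y ≤ s * L := by
    rintro _ ⟨u, ⟨-, hus⟩, rfl⟩
    linarith [add_Lam_le (sub_pos.mpr hus) ht hlam hlt]
  have attained : s * L ∈ S₁ ∪ S₂ := by
    rcases le_or_gt s (t * c) with h | h
    · refine .inl ⟨t - s / c, ⟨sub_nonneg.mpr ((div_le_iff₀ hc).mpr h),
        sub_lt_self t (by positivity)⟩, ?_⟩
      have := add_Lam_of_critical (div_pos hs hc) hlam hlt
      rw [div_mul_cancel₀ s hc.ne'] at this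
      rw [sub_sub_cancel]
      linarith
    · refine .inr ⟨s - t * c, ⟨sub_nonneg.mpr h.le, sub_lt_self s (by positivity)⟩, ?_⟩
      rw [sub_sub_cancel]
      linarith [add_Lam_of_critical ht hlam hlt]
  have ne₁ : S₁.Nonempty := ⟨_, 0, ⟨le_rfl, ht⟩, rfl⟩
  have ne₂ : S₂.Nonempty := ⟨_, 0, ⟨le_rfl, hs⟩, rfl⟩
  rw [← csSup_union ⟨s * L, ub₁⟩ ne₁ ⟨s * L, ub₂⟩ ne₂]
  refine (IsGreatest.csSup_eq ⟨attained, ?_⟩).symm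
  rintro y (hy | hy)
  exacts [ub₁ y hy, ub₂ y hy]

theorem burke_variational_identity (μ lam : ℝ) (hμ : 0 < μ) (hlam : 0 < lam)
    (hlt : lam < μ) :
    ∀ s t : ℝ, 0 < s → 0 < t →
      s * Real.log (μ / (μ - lam)) =
        max
          (sSup {y : ℝ | ∃ r ∈ Set.Ico (0:ℝ) t,
            y = (t - r) * (lam ^ 2 / 2 - μ * lam) + Lam s (t - r) lam})
          (sSup {y : ℝ | ∃ u ∈ Set.Ico (0:ℝ) s,
            y = t * (lam ^ 2 / 2 - μ * lam) + u * Real.log (μ / (μ - lam)) +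
              Lam (s - u) t lam}) :=
  burke_variational_identity_general μ lam hlam hlt
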